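/- arXiv:1010.3424 — 3 statements merged into one kernel-verified Lean document; each statement's English description precedes it below -/
import Mathlib

section
/- Let T₁, …, Tₘ be colored graphs, each with at least one edge, let E be the maximum number of edges among the Tᵢ, and let r > 0. Set M = 2mEr. If α, β ∈ ℕᵐ are nonzero lattice vectors with ‖β‖ ≥ M‖α‖ and ‖α/‖α‖ − β/‖β‖‖ ≤ 1/M, then the disjoint union β·T (taking βᵢ copies of Tᵢ) is r-isomorphic to an integer multiple of α·T (i.e., to (tα)·T for some positive integer t). -/
open Filter Topology

/-- A finite colored (edge-labeled) directed graph with labels in `L`. -/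
structure CGraph (L : Type) where
  n : ℕ
  edges : Finset (Fin n × Fin n × L)

namespace CGraph

variable {L : Type} [DecidableEq L]

/-- Map an edge along a vertex map. -/
def mapEdge {n m : ℕ} (f : Fin n → Fin m) (e : Fin n × Fin n × L) : Fin m × Fin m × L :=
  (f e.1, f e.2.1, e.2.2)

/-- The vertices appearing in an edge set. -/
def supp {n : ℕ} (E : Finset (Fin n × Fin n × L)) : Finset (Fin n) :=
  E.image (·.1) ∪ E.image (·.2.1)

/-- `f`, `EA` witness an `r`-isomorphism between `A` and `B`: `EA` is a subgraph of `A`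
containing at least a `(1 - 1/r)`-fraction of the edges of `A`, whose image under the
(injective-on-`EA`) vertex map `f` is a subgraph of `B` containing at least a
`(1 - 1/r)`-fraction of the edges of `B`. -/
def IsRIsoWitness (r : ℕ) (A B : CGraph L) (f : Fin A.n → Fin B.n)
    (EA : Finset (Fin A.n × Fin A.n × L)) : Prop :=
  EA ⊆ A.edges ∧ Set.InjOn f (supp EA) ∧
    EA.image (mapEdge f) ⊆ B.edges ∧
    ((1 : ℝ) - 1 / r) * A.edges.card ≤ EA.card ∧
    ((1 : ℝ) - 1 / r) * B.edges.card ≤ EA.card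

/-- `A` and `B` are `r`-isomorphic colored graphs. -/
def RIso (r : ℕ) (A B : CGraph L) : Prop :=
  ∃ f EA, IsRIsoWitness r A B f EA

/-- Disjoint union of colored graphs. -/
def disjUnion (A B : CGraph L) : CGraph L :=
  ⟨A.n + B.n,
    (A.edges.image (mapEdge (Fin.castAdd B.n))) ∪ (B.edges.image (mapEdge (Fin.natAdd A.n)))⟩

/-- Disjoint union of `k` copies of `A`. -/
def nsmul : ℕ → CGraph L → CGraph L
  | 0, _ => ⟨0, ∅⟩
  | k + 1, A => disjUnion A (nsmul k A)

/-- The linear combination `α · T`: disjoint union of `α i` copies of `T i`. -/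
def lincomb {m : ℕ} (α : Fin m → ℕ) (T : Fin m → CGraph L) : CGraph L :=
  (List.finRange m).foldr (fun i B => disjUnion (nsmul (α i) (T i)) B) ⟨0, ∅⟩

/-- Restriction of a colored graph to the edges whose color lies in `Z`. -/
def restrict (A : CGraph L) (Z : Finset L) : CGraph L :=
  ⟨A.n, A.edges.filter (fun e => e.2.2 ∈ Z)⟩

variable {Γ : Type*} [Group Γ]

/-- The ball of radius `r` around `1` in the Cayley graph of `Γ` with respect to the
generators `lab '' S`. -/
def ball (lab : L → Γ) (S : Finset L) (r : ℕ) : Set Γ :=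
  {γ | ∃ w : List L, (∀ x ∈ w, x ∈ S) ∧ w.length ≤ r ∧ (w.map lab).prod = γ}

/-- The vertex `p` of `G` has an `r`-neighborhood isomorphic, as a rooted edge-labeled
graph, to the `r`-ball of the Cayley graph of `Γ` with generators `lab '' S`. -/
def GoodVertex (lab : L → Γ) (S : Finset L) (G : CGraph L) (r : ℕ) (p : Fin G.n) : Prop :=
  ∃ f : Γ → Fin G.n, f 1 = p ∧ Set.InjOn f (ball lab S r) ∧
    ∀ γ ∈ ball lab S r, ∀ δ ∈ ball lab S r, ∀ c : L,
      ((f γ, f δ, c) ∈ G.edges ↔ (c ∈ S ∧ δ = γ * lab c))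

/-- `G` is an `r`-approximation of the Cayley graph of `Γ` with generators `lab '' S`. -/
def IsApprox (lab : L → Γ) (S : Finset L) (G : CGraph L) (r : ℕ) : Prop :=
  ((1 : ℝ) - 1 / r) * G.n < {p : Fin G.n | GoodVertex lab S G r p}.ncard

/-- A sofic approximation: for each `r`, eventually all graphs are `r`-approximations. -/
def SoficApprox (lab : L → Γ) (S : Finset L) (G : ℕ → CGraph L) : Prop :=
  ∀ r : ℕ, ∀ᶠ n in atTop, IsApprox lab S (G n) r

/-- Two vertices are adjacent with respect to an edge set (ignoring colors/orientation). -/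
def adjRel {n : ℕ} (E : Finset (Fin n × Fin n × L)) (a b : Fin n) : Prop :=
  ∃ c, (a, b, c) ∈ E ∨ (b, a, c) ∈ E

/-- The connected component of `v` with respect to an edge set. -/
def component {n : ℕ} (E : Finset (Fin n × Fin n × L)) (v : Fin n) : Set (Fin n) :=
  {w | Relation.ReflTransGen (adjRel E) v w}

/-- A sequence of finite colored graphs is hyperfinite if for every `ε > 0` there is `K`
such that from each `G n` one can erase at most `ε |E(G n)|` edges so that all components
of the remaining graph have at most `K` vertices. -/
def Hyperfinite (G : ℕ → CGraph L) : Prop :=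
  ∀ ε : ℝ, 0 < ε → ∃ K : ℕ, ∀ n, ∃ F ⊆ (G n).edges,
    (F.card : ℝ) ≤ ε * (G n).edges.card ∧
    ∀ v, (component ((G n).edges \ F) v).ncard ≤ K

end CGraph

/-- The normalized Hamming rank of a permutation of `Fin n`. -/
noncomputable def rk {n : ℕ} (g : Equiv.Perm (Fin n)) : ℝ :=
  1 - (Finset.univ.filter fun x => g x = x).card / n

/-- `F` is a Følner sequence of finite subsets of `Γ` with respect to the generating set `S`. -/
def IsFolnerSeq {Γ : Type*} [Group Γ] [DecidableEq Γ] (S : Finset Γ) (F : ℕ → Finset Γ) : Prop :=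
  (∀ n, (F n).Nonempty) ∧ ∀ s ∈ S,
    Tendsto (fun n => (((F n).image (· * s) \ F n).card : ℝ) / (F n).card) atTop (𝓝 0)

/-- A sofic representation of `Γ`: a map to the product of finite symmetric groups which is a
homomorphism into the metric ultraproduct `Σ = (∏ Sₙ)/H` and is faithful there
(`rk (φ γ) = 1` for `γ ≠ 1`). -/
def IsSoficRep (ω : Ultrafilter ℕ) {Γ : Type*} [Group Γ] (N : ℕ → ℕ)
    (φ : Γ → ∀ n : ℕ, Equiv.Perm (Fin (N n))) : Prop :=
  (∀ γ δ : Γ, Tendsto (fun n => rk ((φ γ n * φ δ n)⁻¹ * φ (γ * δ) n)) ω (𝓝 0)) ∧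
  (∀ γ : Γ, γ ≠ 1 → Tendsto (fun n => rk (φ γ n)) ω (𝓝 1))

/-- Two sofic representations are conjugate by an element `g` of the metric ultraproduct. -/
def ConjugateReps (ω : Ultrafilter ℕ) {Γ : Type*} [Group Γ] (N : ℕ → ℕ)
    (φ ψ : Γ → ∀ n : ℕ, Equiv.Perm (Fin (N n))) : Prop :=
  ∃ g : ∀ n : ℕ, Equiv.Perm (Fin (N n)), ∀ γ,
    Tendsto (fun n => rk ((g n * ψ γ n * (g n)⁻¹)⁻¹ * φ γ n)) ω (𝓝 0)

/-- A group is sofic: every finite subset admits arbitrarily good almost-multiplicative,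
almost-free approximations by permutations. -/
def IsSofic (G : Type*) [Group G] : Prop :=
  ∀ (F : Finset G) (ε : ℝ), 0 < ε → ∃ (n : ℕ) (f : G → Equiv.Perm (Fin n)), 0 < n ∧
    (∀ g ∈ F, ∀ h ∈ F, rk ((f g * f h)⁻¹ * f (g * h)) ≤ ε) ∧
    (∀ g ∈ F, g ≠ 1 → 1 - ε ≤ rk (f g))

open Classical in
/-- A group is amenable: it satisfies the Følner condition. -/
def IsAmenable (G : Type*) [Group G] : Prop :=
  ∀ (F : Finset G) (ε : ℝ), 0 < ε → ∃ A : Finset G, A.Nonempty ∧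
    ∀ g ∈ F, (((A.image (g * ·)) \ A).card : ℝ) ≤ ε * A.card

/-- Euclidean norm of a vector in `ℝ^m`. -/
noncomputable def vnorm {m : ℕ} (α : Fin m → ℝ) : ℝ :=
  Real.sqrt (∑ i, (α i) ^ 2)


/-! Put `a = ‖α‖`, `b = ‖β‖` and let `t` be the integer nearest to `b / a`. The graphs `β·T` and
`(tα)·T` both contain `(β ⊓ tα)·T`, and each has at most `∑ᵢ |βᵢ - tαᵢ| |E(Tᵢ)|` edges outside
it. Splitting `βᵢ - tαᵢ = (b/a - t) αᵢ - b (αᵢ/a - βᵢ/b)` bounds each `|βᵢ - tαᵢ|` by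
`a/2 + b/M ≤ 3b/(2M)`, so at most `3b/(4r)` edges lie outside the common part, while both graphs
have at least `3b/4` edges. -/

namespace CGraph

variable {L : Type}

theorem mapEdge_injective {n p : ℕ} {f : Fin n → Fin p} (hf : Function.Injective f) :
    Function.Injective (mapEdge (L := L) f) := by
  rintro ⟨a, b, c⟩ ⟨a', b', c'⟩ h
  simp only [mapEdge, Prod.mk.injEq] at h
  obtain ⟨h1, h2, rfl⟩ := h
  rw [hf h1, hf h2]

variable [DecidableEq L]

theorem supp_image_mapEdge_subset_range {n p : ℕ} (g : Fin n → Fin p)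
    (s : Finset (Fin n × Fin n × L)) : ↑(supp (s.image (mapEdge g))) ⊆ Set.range g := by
  intro x hx
  simp only [supp, Finset.coe_union, Finset.coe_image, Set.mem_union, Set.mem_image] at hx
  rcases hx with ⟨_, ⟨e, _, rfl⟩, rfl⟩ | ⟨_, ⟨e, _, rfl⟩, rfl⟩ <;> exact ⟨_, rfl⟩

theorem card_edges_disjUnion (A B : CGraph L) :
    (disjUnion A B).edges.card = A.edges.card + B.edges.card := by
  have hdisj : Disjoint (A.edges.image (mapEdge (Fin.castAdd B.n)))
      (B.edges.image (mapEdge (Fin.natAdd A.n))) := by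
    refine Finset.disjoint_left.2 ?_
    intro _ he he'
    obtain ⟨e, -, rfl⟩ := Finset.mem_image.1 he
    obtain ⟨e', -, h⟩ := Finset.mem_image.1 he'
    have := congrArg (fun p => (p.1 : ℕ)) h
    simp only [mapEdge, Fin.val_natAdd, Fin.val_castAdd] at this
    omega
  rw [disjUnion, Finset.card_union_of_disjoint hdisj,
    Finset.card_image_of_injective _ (mapEdge_injective (Fin.castAdd_injective _ _)),
    Finset.card_image_of_injective _ (mapEdge_injective (Fin.natAdd_injective _ _))]

theorem card_edges_nsmul (k : ℕ) (A : CGraph L) :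
    (nsmul k A).edges.card = k * A.edges.card := by
  induction k with
  | zero => simp [nsmul]
  | succ k ih => rw [nsmul, card_edges_disjUnion, ih]; ring

theorem card_edges_lincomb {m : ℕ} (γ : Fin m → ℕ) (T : Fin m → CGraph L) :
    (lincomb γ T).edges.card = ∑ i, γ i * (T i).edges.card := by
  rw [lincomb, Fin.sum_univ_def]
  induction List.finRange m with
  | nil => rfl
  | cons i l ih => rw [List.foldr_cons, card_edges_disjUnion, card_edges_nsmul, ih]; simp

theorem card_edges_lincomb_mul {m : ℕ} (t : ℕ) (γ : Fin m → ℕ) (T : Fin m → CGraph L) :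
    (lincomb (fun i => t * γ i) T).edges.card = t * (lincomb γ T).edges.card := by
  simp only [card_edges_lincomb, Finset.mul_sum, mul_assoc]

theorem card_edges_lincomb_sub_inf_le {m : ℕ} (β γ : Fin m → ℕ) (T : Fin m → CGraph L) :
    ((lincomb β T).edges.card : ℝ) - (lincomb (β ⊓ γ) T).edges.card
      ≤ ∑ i, |(β i : ℝ) - γ i| * (T i).edges.card := by
  rw [card_edges_lincomb, card_edges_lincomb]
  push_cast
  rw [← Finset.sum_sub_distrib]
  refine Finset.sum_le_sum fun i _ => ?_
  rw [← sub_mul]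
  refine mul_le_mul_of_nonneg_right ?_ (Nat.cast_nonneg _)
  rcases le_total (β i) (γ i) with h | h
  · rw [Pi.inf_apply, inf_of_le_left h, sub_self]
    exact abs_nonneg _
  · rw [Pi.inf_apply, inf_of_le_right h]
    exact le_abs_self _

def Embeds (A B : CGraph L) : Prop :=
  ∃ f : Fin A.n → Fin B.n, Function.Injective f ∧ A.edges.image (mapEdge f) ⊆ B.edges

theorem Embeds.refl (A : CGraph L) : Embeds A A := by
  refine ⟨id, Function.injective_id, fun _ hx => ?_⟩
  obtain ⟨e, he, rfl⟩ := Finset.mem_image.1 hx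
  exact he

theorem embeds_of_n_eq_zero {A : CGraph L} (hA : A.n = 0) (B : CGraph L) : Embeds A B := by
  refine ⟨fun x => absurd x.pos (by omega), fun x => absurd x.pos (by omega), ?_⟩
  intro e he
  obtain ⟨e, -, rfl⟩ := Finset.mem_image.1 he
  exact absurd e.1.pos (by omega)

theorem Embeds.disjUnion {A B C D : CGraph L} (hAC : Embeds A C) (hBD : Embeds B D) :
    Embeds (disjUnion A B) (disjUnion C D) := by
  obtain ⟨f, hf, hfE⟩ := hAC
  obtain ⟨g, hg, hgE⟩ := hBD
  obtain ⟨F, hF, hFl, hFr⟩ : ∃ F : Fin (A.n + B.n) → Fin (C.n + D.n), Function.Injective F ∧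
      (∀ x, F (Fin.castAdd B.n x) = Fin.castAdd D.n (f x)) ∧
      ∀ x, F (Fin.natAdd A.n x) = Fin.natAdd C.n (g x) :=
    ⟨finSumFinEquiv ∘ Sum.map f g ∘ finSumFinEquiv.symm,
      finSumFinEquiv.injective.comp ((hf.sumMap hg).comp finSumFinEquiv.symm.injective),
      by simp, by simp⟩
  refine ⟨F, hF, fun _ hy => ?_⟩
  obtain ⟨x, hx, rfl⟩ := Finset.mem_image.1 hy
  rcases Finset.mem_union.1 hx with hx | hx
  · obtain ⟨e, he, rfl⟩ := Finset.mem_image.1 hx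
    refine Finset.mem_union_left _ (Finset.mem_image.2 ⟨_, hfE (Finset.mem_image_of_mem _ he), ?_⟩)
    simp only [mapEdge, hFl]; rfl
  · obtain ⟨e, he, rfl⟩ := Finset.mem_image.1 hx
    refine Finset.mem_union_right _ (Finset.mem_image.2 ⟨_, hgE (Finset.mem_image_of_mem _ he), ?_⟩)
    simp only [mapEdge, hFr]; rfl

theorem embeds_nsmul_of_le (A : CGraph L) {j k : ℕ} (hjk : j ≤ k) :
    Embeds (nsmul j A) (nsmul k A) := by
  induction j generalizing k with
  | zero => exact embeds_of_n_eq_zero rfl _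
  | succ j ih =>
    obtain ⟨k, rfl⟩ : ∃ k', k = k' + 1 := ⟨k - 1, by omega⟩
    exact (Embeds.refl A).disjUnion (ih (by omega))

theorem embeds_lincomb_of_le {m : ℕ} (T : Fin m → CGraph L) {β γ : Fin m → ℕ} (h : β ≤ γ) :
    Embeds (lincomb β T) (lincomb γ T) := by
  unfold lincomb
  induction List.finRange m with
  | nil => exact Embeds.refl _
  | cons i l ih => exact (embeds_nsmul_of_le (T i) (h i)).disjUnion ih

theorem RIso.of_embeds {r : ℕ} {A B C : CGraph L} (hCA : Embeds C A) (hCB : Embeds C B)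
    (hB : 0 < B.n) (hA : ((1 : ℝ) - 1 / r) * A.edges.card ≤ C.edges.card)
    (hB' : ((1 : ℝ) - 1 / r) * B.edges.card ≤ C.edges.card) : RIso r A B := by
  obtain ⟨f₁, hf₁, hf₁E⟩ := hCA
  obtain ⟨f₂, hf₂, hf₂E⟩ := hCB
  set f : Fin A.n → Fin B.n := Function.extend f₁ f₂ fun _ => ⟨0, hB⟩
  have hf : f ∘ f₁ = f₂ := funext (hf₁.extend_apply f₂ fun _ => ⟨0, hB⟩)
  have hcard : (C.edges.image (mapEdge f₁)).card = C.edges.card :=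
    Finset.card_image_of_injective _ (mapEdge_injective hf₁)
  refine ⟨f, C.edges.image (mapEdge f₁), hf₁E, ?_, ?_, hcard ▸ hA, hcard ▸ hB'⟩
  · rintro _ hx _ hy hxy
    obtain ⟨c, rfl⟩ := supp_image_mapEdge_subset_range f₁ C.edges hx
    obtain ⟨c', rfl⟩ := supp_image_mapEdge_subset_range f₁ C.edges hy
    simp only [f, hf₁.extend_apply] at hxy
    rw [hf₂ hxy]
  · rw [Finset.image_image]
    exact (show mapEdge f ∘ mapEdge f₁ = mapEdge (L := L) f₂ by rw [← hf]; rfl) ▸ hf₂E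

theorem RIso.lincomb_of_sum_le {m : ℕ} (T : Fin m → CGraph L) {r : ℕ} {β γ : Fin m → ℕ} {c : ℝ}
    (hc : 0 < c) (hβ : c ≤ (lincomb β T).edges.card) (hγ : c ≤ (lincomb γ T).edges.card)
    (hsum : ∑ i, |(β i : ℝ) - γ i| * (T i).edges.card ≤ c / r) :
    RIso r (lincomb β T) (lincomb γ T) := by
  have hγn : 0 < (lincomb γ T).n := by
    obtain ⟨e, -⟩ := Finset.card_pos.1 (show 0 < (lincomb γ T).edges.card by
      exact_mod_cast hc.trans_le hγ)
    exact e.1.pos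
  have hβ' := card_edges_lincomb_sub_inf_le β γ T
  have hγ' := card_edges_lincomb_sub_inf_le γ β T
  rw [inf_comm γ β] at hγ'
  simp only [abs_sub_comm (γ _ : ℝ)] at hγ'
  have hβr : c / r ≤ (lincomb β T).edges.card / r := by gcongr
  have hγr : c / r ≤ (lincomb γ T).edges.card / r := by gcongr
  refine .of_embeds (embeds_lincomb_of_le T inf_le_left) (embeds_lincomb_of_le T inf_le_right)
    hγn ?_ ?_ <;> rw [sub_mul, one_mul, one_div_mul_eq_div] <;> linarith

end CGraph

theorem abs_le_vnorm {m : ℕ} (x : Fin m → ℝ) (i : Fin m) : |x i| ≤ vnorm x :=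
  Real.abs_le_sqrt (Finset.single_le_sum (fun j _ => sq_nonneg (x j)) (Finset.mem_univ i))

theorem vnorm_le_sum_of_nonneg {m : ℕ} {x : Fin m → ℝ} (hx : ∀ i, 0 ≤ x i) :
    vnorm x ≤ ∑ i, x i :=
  (Real.sqrt_le_left (Finset.sum_nonneg fun i _ => hx i)).2
    (Finset.sum_sq_le_sq_sum_of_nonneg fun i _ => hx i)

theorem one_le_vnorm_natCast {m : ℕ} {α : Fin m → ℕ} (hα : α ≠ 0) :
    1 ≤ vnorm (fun i => (α i : ℝ)) := by
  obtain ⟨j, hj⟩ := Function.ne_iff.mp hα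
  calc (1 : ℝ) ≤ |(α j : ℝ)| := by
        rw [abs_of_nonneg (Nat.cast_nonneg _), Nat.one_le_cast]
        exact Nat.one_le_iff_ne_zero.2 hj
    _ ≤ vnorm (fun i => (α i : ℝ)) := abs_le_vnorm (fun i => (α i : ℝ)) j

theorem exists_nat_pos_abs_sub_le_half {x : ℝ} (hx : 1 / 2 ≤ x) :
    ∃ t : ℕ, 0 < t ∧ |x - t| ≤ 1 / 2 := by
  refine ⟨⌊x + 1 / 2⌋₊, Nat.le_floor (by push_cast; linarith), abs_le.2 ⟨?_, ?_⟩⟩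
  · linarith [Nat.floor_le (show 0 ≤ x + 1 / 2 by linarith)]
  · linarith [Nat.lt_floor_add_one (x + 1 / 2)]

theorem sum_abs_sub_mul_le {m : ℕ} (x y c : Fin m → ℝ) {t K δ : ℝ}
    (hx : vnorm x ≠ 0) (hy : vnorm y ≠ 0) (ht : |vnorm y / vnorm x - t| ≤ 1 / 2)
    (hxy : vnorm (fun i => x i / vnorm x - y i / vnorm y) ≤ δ)
    (hc₀ : ∀ i, 0 ≤ c i) (hcK : ∀ i, c i ≤ K) :
    ∑ i, |y i - t * x i| * c i ≤ m * K * (vnorm x / 2 + vnorm y * δ) := by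
  have hy₀ : 0 ≤ vnorm y := Real.sqrt_nonneg _
  have hterm : ∀ i, |y i - t * x i| ≤ vnorm x / 2 + vnorm y * δ := fun i => by
    have hsplit : y i - t * x i
        = (vnorm y / vnorm x - t) * x i - vnorm y * (x i / vnorm x - y i / vnorm y) := by
      field_simp
      ring
    calc |y i - t * x i|
        ≤ |vnorm y / vnorm x - t| * |x i| + vnorm y * |x i / vnorm x - y i / vnorm y| := by
          rw [hsplit]
          refine (abs_sub _ _).trans_eq ?_
          rw [abs_mul, abs_mul, abs_of_nonneg hy₀]
      _ ≤ 1 / 2 * vnorm x + vnorm y * δ := by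
          gcongr
          · exact abs_le_vnorm x i
          · exact (abs_le_vnorm _ i).trans hxy
      _ = vnorm x / 2 + vnorm y * δ := by ring
  calc ∑ i, |y i - t * x i| * c i ≤ ∑ _i : Fin m, (vnorm x / 2 + vnorm y * δ) * K :=
        Finset.sum_le_sum fun i _ =>
          mul_le_mul (hterm i) (hcK i) (hc₀ i) ((abs_nonneg _).trans (hterm i))
    _ = m * K * (vnorm x / 2 + vnorm y * δ) := by
        rw [Finset.sum_const, Finset.card_univ, Fintype.card_fin, nsmul_eq_mul]; ring

theorem CGraph.vnorm_le_card_edges_lincomb {L : Type} [DecidableEq L] {m : ℕ}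
    {T : Fin m → CGraph L} (hT : ∀ i, 1 ≤ (T i).edges.card) (γ : Fin m → ℕ) :
    vnorm (fun i => (γ i : ℝ)) ≤ (lincomb γ T).edges.card := by
  calc vnorm (fun i => (γ i : ℝ)) ≤ ∑ i, (γ i : ℝ) :=
        vnorm_le_sum_of_nonneg fun i => Nat.cast_nonneg _
    _ ≤ ∑ i, (γ i : ℝ) * (T i).edges.card := Finset.sum_le_sum fun i _ =>
        le_mul_of_one_le_right (Nat.cast_nonneg _) (by exact_mod_cast hT i)
    _ = (lincomb γ T).edges.card := by rw [CGraph.card_edges_lincomb]; push_cast; rfl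

theorem nearby_vectors_general {L : Type} [DecidableEq L] {m : ℕ} (T : Fin m → CGraph L)
    (hT : ∀ i, 1 ≤ (T i).edges.card)
    (E : ℕ) (hE : E = Finset.univ.sup (fun i => (T i).edges.card))
    (r : ℕ) (hr : 0 < r)
    (M : ℕ) (hM : M = 2 * m * E * r)
    (α β : Fin m → ℕ) (hα : α ≠ 0)
    (hlen : (M : ℝ) * vnorm (fun i => (α i : ℝ)) ≤ vnorm (fun i => (β i : ℝ)))
    (hclose : vnorm (fun i =>
        (α i : ℝ) / vnorm (fun j => (α j : ℝ)) - (β i : ℝ) / vnorm (fun j => (β j : ℝ)))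
      ≤ 1 / M) :
    ∃ t : ℕ, 0 < t ∧
      CGraph.RIso r (CGraph.lincomb β T) (CGraph.lincomb (fun i => t * α i) T) := by
  obtain ⟨j, -⟩ := Function.ne_iff.mp hα
  set a := vnorm (fun i => (α i : ℝ))
  set b := vnorm (fun i => (β i : ℝ))
  have ha : 1 ≤ a := one_le_vnorm_natCast hα
  have hcard (i : Fin m) : (T i).edges.card ≤ E :=
    hE ▸ Finset.le_sup (f := fun i => (T i).edges.card) (Finset.mem_univ i)
  have hm : (1 : ℝ) ≤ m := by exact_mod_cast j.pos
  have hE₁ : (1 : ℝ) ≤ E := by exact_mod_cast (hT j).trans (hcard j)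
  have hr₁ : (1 : ℝ) ≤ r := by exact_mod_cast hr
  have hMr : (M : ℝ) = 2 * m * E * r := by rw [hM]; push_cast; ring
  have hM₂ : (2 : ℝ) ≤ M := by rw [hMr]; nlinarith [mul_le_mul hm hE₁ zero_le_one (by positivity)]
  have haM : a ≤ b / M := by rw [le_div_iff₀ (by positivity)]; linarith
  have h2a : 2 * a ≤ b := by nlinarith
  obtain ⟨t, ht, hta⟩ := exists_nat_pos_abs_sub_le_half (x := b / a) (by
    rw [le_div_iff₀ (by positivity)]; linarith)
  have herr : ∑ i, |(β i : ℝ) - t * α i| * (T i).edges.card ≤ 3 * b / 4 / r := by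
    refine (sum_abs_sub_mul_le _ _ _ (by positivity) (by linarith : 0 < b).ne' hta hclose
      (fun i => Nat.cast_nonneg _) (fun i => Nat.cast_le.2 (hcard i))).trans ?_
    calc m * E * (a / 2 + b * (1 / M)) ≤ m * E * (b / M / 2 + b * (1 / M)) := by gcongr
      _ = 3 * b / 4 / r := by rw [hMr]; field_simp; ring
  have htαT : 3 * b / 4 ≤ (CGraph.lincomb (fun i => t * α i) T).edges.card := by
    rw [CGraph.card_edges_lincomb_mul, Nat.cast_mul]
    calc 3 * b / 4 ≤ (b / a - 1 / 2) * a := by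
          rw [sub_mul, div_mul_cancel₀ _ (by positivity)]; linarith
      _ ≤ t * a := by gcongr; linarith [(abs_le.1 hta).2]
      _ ≤ t * (CGraph.lincomb α T).edges.card := by
        gcongr; exact CGraph.vnorm_le_card_edges_lincomb hT α
  refine ⟨t, ht, CGraph.RIso.lincomb_of_sum_le T (by linarith) ?_ htαT (by push_cast; exact herr)⟩
  linarith [CGraph.vnorm_le_card_edges_lincomb hT β]

/-- Let `T₁, …, Tₘ` be colored graphs, each with at least one edge, `E` the
maximum number of edges among them, `r > 0` and `M = 2mEr`.  If `α, β ∈ ℕᵐ` are nonzero with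
`‖β‖ ≥ M‖α‖` and `‖σ(α) − σ(β)‖ ≤ 1/M`, then `β·T` is `r`-isomorphic to an integer multiple
`(tα)·T` of `α·T`. -/
theorem nearby_vectors {L : Type} [DecidableEq L] {m : ℕ} (T : Fin m → CGraph L)
    (hT : ∀ i, 1 ≤ (T i).edges.card)
    (E : ℕ) (hE : E = Finset.univ.sup (fun i => (T i).edges.card))
    (r : ℕ) (hr : 0 < r)
    (M : ℕ) (hM : M = 2 * m * E * r)
    (α β : Fin m → ℕ) (hα : α ≠ 0) (hβ : β ≠ 0)
    (hlen : (M : ℝ) * vnorm (fun i => (α i : ℝ)) ≤ vnorm (fun i => (β i : ℝ)))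
    (hclose : vnorm (fun i =>
        (α i : ℝ) / vnorm (fun j => (α j : ℝ)) - (β i : ℝ) / vnorm (fun j => (β j : ℝ)))
      ≤ 1 / M) :
    ∃ t : ℕ, 0 < t ∧
      CGraph.RIso r (CGraph.lincomb β T) (CGraph.lincomb (fun i => t * α i) T) :=
  nearby_vectors_general T hT E hE r hr M hM α β hα hlen hclose
end

section
/- Let α and β be partitions of a finite set S such that each α-class meets each β-class in at most one element. Suppose G is a graph with vertex set contained in S such that every edge of G has both endpoints in the same α-class or both endpoints in the same β-class. Then every simple cycle of G of length less than 2r lies entirely within a single α-class or entirely within a single β-class, provided every simple cycle in the incidence graph of α and β has length greater than 2r. -/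
/-- The incidence graph of two partitions (given by their class maps `cα`, `cβ`): a bipartite
graph on the `α`-classes and `β`-classes, where each element `s` joins its `α`-class to its
`β`-class. -/
def incGraph {S A B : Type*} (cα : S → A) (cβ : S → B) : SimpleGraph (A ⊕ B) where
  Adj u v := ∃ s : S, (u = .inl (cα s) ∧ v = .inr (cβ s)) ∨ (u = .inr (cβ s) ∧ v = .inl (cα s))
  symm := by
    constructor
    rintro u v ⟨s, ⟨h1, h2⟩ | ⟨h1, h2⟩⟩
    · exact ⟨s, Or.inr ⟨h2, h1⟩⟩
    · exact ⟨s, Or.inl ⟨h2, h1⟩⟩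
  loopless := by
    constructor
    rintro u ⟨s, ⟨h1, h2⟩ | ⟨h1, h2⟩⟩ <;> subst h1 <;> simp at h2

/-! Every element `s` is an edge `incEdge s` of the incidence graph, and since an `α`-class and a
`β`-class meet in at most one element, distinct elements give distinct edges. Walk around a cycle
of `G` while standing on an endpoint of the current element's edge: an `α`-step can keep the
`α`-class endpoint, a `β`-step the `β`-class endpoint, and changing from one kind of step to the
other crosses the current element's edge. This traces a closed trail in the incidence graph with at
most as many edges as the cycle, nonempty unless the cycle stays inside one class, and a nonempty
closed trail contains a cycle of the incidence graph shorter than the girth allows. -/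

open SimpleGraph

section

variable {S A B : Type*} (cα : S → A) (cβ : S → B)

def incEdge (s : S) : Sym2 (A ⊕ B) := s(.inl (cα s), .inr (cβ s))

variable {cα cβ}

theorem incEdge_injective (hmeet : ∀ x y : S, cα x = cα y → cβ x = cβ y → x = y) :
    Function.Injective (incEdge cα cβ) := by
  intro x y h
  simp only [incEdge, Sym2.eq_iff, Sum.inl.injEq, Sum.inr.injEq, reduceCtorEq, and_false,
    or_false] at h
  exact hmeet x y h.1 h.2

theorem incGraph_adj_of_eq_incEdge {a b : A ⊕ B} {s : S} (h : s(a, b) = incEdge cα cβ s) :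
    (incGraph cα cβ).Adj a b :=
  ⟨s, Sym2.eq_iff.1 h⟩

theorem exists_mem_incEdge_and_mem_incEdge {x y : S} (h : cα x = cα y ∨ cβ x = cβ y) :
    ∃ a, a ∈ incEdge cα cβ x ∧ a ∈ incEdge cα cβ y := by
  rcases h with h | h
  · exact ⟨.inl (cα x), by simp [incEdge, h]⟩
  · exact ⟨.inr (cβ x), by simp [incEdge, h]⟩

theorem exists_mem_incEdge_of_notMem {x y : S} (h : cα x = cα y ∨ cβ x = cβ y) {a : A ⊕ B}
    (hx : a ∈ incEdge cα cβ x) (hy : a ∉ incEdge cα cβ y) :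
    ∃ b ∈ incEdge cα cβ y, s(a, b) = incEdge cα cβ x := by
  simp only [incEdge, Sym2.mem_iff] at hx hy
  rcases hx with rfl | rfl <;> rcases h with h | h <;> simp_all [incEdge]

theorem forall_eq_or_forall_eq_of_forall_mem_incEdge {a : A ⊕ B} {x : S} {l : List S}
    (hx : a ∈ incEdge cα cβ x) (hl : ∀ y ∈ l, a ∈ incEdge cα cβ y) :
    (∀ y ∈ l, cα y = cα x) ∨ (∀ y ∈ l, cβ y = cβ x) := by
  simp only [incEdge, Sym2.mem_iff] at hx hl
  rcases hx with rfl | rfl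
  · exact .inl fun y hy => by simpa [eq_comm] using hl y hy
  · exact .inr fun y hy => by simpa [eq_comm] using hl y hy

variable {G : SimpleGraph S}

theorem exists_incGraph_walk (hedge : ∀ x y : S, G.Adj x y → cα x = cα y ∨ cβ x = cβ y)
    {u v : S} (p : G.Walk u v) {a : A ⊕ B} (ha : a ∈ incEdge cα cβ u) :
    ∃ b ∈ incEdge cα cβ v, ∃ W : (incGraph cα cβ).Walk a b,
      W.edges.Sublist (p.support.dropLast.map (incEdge cα cβ)) ∧
      (W.Nil → ∀ y ∈ p.support, a ∈ incEdge cα cβ y) := by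
  induction p generalizing a with
  | nil => exact ⟨a, ha, .nil, by simp, by simpa using ha⟩
  | @cons u w v h q ih =>
    have hdrop : (Walk.cons h q).support.dropLast = u :: q.support.dropLast := by
      simp [List.dropLast_cons_of_ne_nil q.support_ne_nil]
    rw [hdrop, List.map_cons]
    by_cases haw : a ∈ incEdge cα cβ w
    · obtain ⟨b, hb, W, hW, hnil⟩ := ih haw
      exact ⟨b, hb, W, hW.cons _, fun h' => by simpa [ha] using hnil h'⟩
    · obtain ⟨a', ha', he_u⟩ := exists_mem_incEdge_of_notMem (hedge u w h) ha haw
      obtain ⟨b, hb, W, hW, -⟩ := ih ha'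
      refine ⟨b, hb, .cons (incGraph_adj_of_eq_incEdge he_u) W, ?_, Walk.not_nil_cons.elim⟩
      simpa [he_u] using hW

theorem exists_incGraph_isCircuit (hmeet : ∀ x y : S, cα x = cα y → cβ x = cβ y → x = y)
    (hedge : ∀ x y : S, G.Adj x y → cα x = cα y ∨ cβ x = cβ y) {x : S} {c : G.Walk x x}
    (hc : c.IsCycle)
    (hspread : ¬ ((∀ y ∈ c.support, cα y = cα x) ∨ (∀ y ∈ c.support, cβ y = cβ x))) :
    ∃ (v : A ⊕ B) (C : (incGraph cα cβ).Walk v v), C.IsCircuit ∧ C.length ≤ c.length := by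
  cases c with
  | nil => exact absurd .nil hc.not_nil
  | @cons _ y _ h q =>
    obtain ⟨a, hax, hay⟩ := exists_mem_incEdge_and_mem_incEdge (hedge x y h)
    obtain ⟨b, hbx, W, hW, hWnil⟩ := exists_incGraph_walk hedge q hay
    obtain ⟨hx, hq⟩ : x ∉ q.support.dropLast ∧ q.support.dropLast.Nodup := by
      rw [← List.nodup_concat, List.concat_eq_append, q.dropLast_support_concat]
      simpa only [Walk.support_cons, List.tail_cons] using hc.support_nodup
    have hW_trail : W.IsTrail := ⟨(hq.map (incEdge_injective hmeet)).sublist hW⟩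
    have hW_len : W.length ≤ q.length := by
      simpa only [Walk.length_edges, List.length_map, List.length_dropLast, Walk.length_support,
        Nat.add_sub_cancel] using hW.length_le
    by_cases hab : a = b
    · subst hab
      refine ⟨a, W, ⟨hW_trail, fun hnil => hspread ?_⟩, Nat.le_succ_of_le hW_len⟩
      exact forall_eq_or_forall_eq_of_forall_mem_incEdge hax
        (List.forall_mem_cons.2 ⟨hax, hWnil (hnil ▸ .nil)⟩)
    · have he_x : s(b, a) = incEdge cα cβ x :=
        ((Sym2.mem_and_mem_iff (Ne.symm hab)).1 ⟨hbx, hax⟩).symm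
      refine ⟨b, .cons (incGraph_adj_of_eq_incEdge he_x) W, ⟨?_, nofun⟩,
        Nat.succ_le_succ hW_len⟩
      rw [Walk.isTrail_cons, he_x]
      refine ⟨hW_trail, fun he => ?_⟩
      obtain ⟨z, hz, hzx⟩ := List.mem_map.1 (hW.subset he)
      exact hx (incEdge_injective hmeet hzx ▸ hz)

end

/-- Let `α`, `β` be partitions of `S` (class maps `cα`, `cβ`) such that each
`α`-class meets each `β`-class in at most one element, and suppose every simple cycle of the
incidence graph is longer than `2r`.  If every edge of a graph `G` on `S` joins two elements
of the same `α`-class or of the same `β`-class, then every simple cycle of `G` of length less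
than `2r` lies entirely within a single `α`-class or within a single `β`-class. -/
theorem cycles_in_one_class {S A B : Type*} (cα : S → A) (cβ : S → B)
    (hmeet : ∀ x y : S, cα x = cα y → cβ x = cβ y → x = y)
    (r : ℕ)
    (hgirth : ∀ (v : A ⊕ B) (c : (incGraph cα cβ).Walk v v), c.IsCycle → 2 * r < c.length)
    (G : SimpleGraph S)
    (hedge : ∀ x y : S, G.Adj x y → cα x = cα y ∨ cβ x = cβ y) :
    ∀ (x : S) (c : G.Walk x x), c.IsCycle → c.length < 2 * r →
      (∀ y ∈ c.support, cα y = cα x) ∨ (∀ y ∈ c.support, cβ y = cβ x) := by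
  intro x c hc hlen
  by_contra hspread
  classical
  obtain ⟨v, C, hC, hC_len⟩ := exists_incGraph_isCircuit hmeet hedge hc hspread
  have hgirth_C := hgirth v C.cycleBypass hC.isCycle_cycleBypass
  have hbypass_len := C.length_cycleBypass_le_length
  omega
end

section
/- For every triple of positive integers (a, b, r) there exists a finite set S with two partitions α and β such that every α-class has exactly a elements, every β-class has exactly b elements, each α-class meets each β-class in at most one element, and every simple cycle in the incidence graph of α and β has length greater than 2r. -/
/-!
Let `F` be the free group on the `a * b` letters `(i, j)`. Left multiplication by a letter is a
partial bijection of the finite ball of reduced words of length `≤ 2r`; extending each one to a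
permutation of the ball gives a finite group `G` and a homomorphism `F → G`, `(i, j) ↦ g(i, j)`,
which, acting on `1`, sends every `w` of the ball to `w`, so its kernel meets the ball only in `1`.

Take `S = G × [a] × [b]`, let `(h, i, j)` join the `α`-class `(h, j)` to the `β`-class
`(h g(i, j), i)`, and label both kinds of vertices by their group element. Along a walk the labels
are multiplied by the images of the letters crossed, and a cycle, being a trail, never crosses the
same letter back and forth, so it spells a nonempty reduced word of `F` of its own length mapped to
`1`. Hence every cycle is longer than `2r`.
-/

namespace FreeGroup

universe u

variable {ι : Type u} [DecidableEq ι]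

theorem IsReduced.norm_mk {L : List (ι × Bool)} (hL : IsReduced L) : (mk L).norm = L.length := by
  rw [norm, toWord_mk, hL.reduce_eq]

variable (ι) in
abbrev NormBall (n : ℕ) : Type _ := {w : FreeGroup ι // w.norm ≤ n}

instance [Finite ι] (n : ℕ) : Finite (NormBall ι n) :=
  ((List.finite_length_le _ n).preimage toWord_injective.injOn).to_subtype

variable (n : ℕ)

def normBallShiftEquiv (x : ι) :
    {w : NormBall ι n // (of x * w.1).norm ≤ n} ≃
      {w : NormBall ι n // ((of x)⁻¹ * w.1).norm ≤ n} where
  toFun w := ⟨⟨of x * w.1.1, w.2⟩, by simpa using w.1.2⟩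
  invFun w := ⟨⟨(of x)⁻¹ * w.1.1, w.2⟩, by simpa using w.1.2⟩
  left_inv w := by simp
  right_inv w := by simp

noncomputable def normBallShift [Finite ι] (x : ι) : Equiv.Perm (NormBall ι n) :=
  open Classical in (normBallShiftEquiv n x).extendSubtype

variable [Finite ι]

theorem normBallShift_apply (x : ι) (w : NormBall ι n) (h : (of x * w.1).norm ≤ n) :
    normBallShift n x w = ⟨of x * w.1, h⟩ := by
  classical
  exact Equiv.extendSubtype_apply_of_mem (normBallShiftEquiv n x) w h

theorem normBallShift_inv_apply (x : ι) (w : NormBall ι n) (h : ((of x)⁻¹ * w.1).norm ≤ n) :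
    (normBallShift n x)⁻¹ w = ⟨(of x)⁻¹ * w.1, h⟩ := by
  rw [Equiv.Perm.inv_eq_iff_eq, normBallShift_apply n x _ (by simpa using w.2)]
  simp

theorem lift_normBallShift_mk_singleton (a : ι × Bool) (w : NormBall ι n)
    (h : (mk [a] * w.1).norm ≤ n) : (lift (normBallShift n) (mk [a]) w).1 = mk [a] * w.1 := by
  obtain ⟨x, _ | _⟩ := a
  · have hx : mk [(x, false)] = (of x)⁻¹ := by simp [of, inv_mk, invRev]
    simp only [hx] at h ⊢
    simp [normBallShift_inv_apply n x w h]
  · have hx : mk [(x, true)] = of x := rfl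
    simp only [hx] at h ⊢
    simp [normBallShift_apply n x w h]

theorem lift_normBallShift_mk_apply_one {L : List (ι × Bool)} (hL : IsReduced L)
    (hn : L.length ≤ n) :
    (lift (normBallShift n) (mk L) ⟨1, norm_one.trans_le n.zero_le⟩).1 = mk L := by
  induction L with
  | nil => rfl
  | cons a L ih =>
    have hw := ih (List.IsChain.of_cons hL) (Nat.le_of_succ_le hn)
    rw [← List.singleton_append, ← mul_mk, _root_.map_mul, Equiv.Perm.mul_apply,
      lift_normBallShift_mk_singleton _ _ _
        (by rwa [hw, mul_mk, List.singleton_append, hL.norm_mk]), hw]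

theorem exists_finite_eq_one_of_lift_eq_one_of_norm_le :
    ∃ (G : Type u) (_ : Group G) (_ : Finite G) (g : ι → G),
      ∀ w : FreeGroup ι, w.norm ≤ n → lift g w = 1 → w = 1 := by
  refine ⟨_, inferInstance, inferInstance, normBallShift n, fun w hw h1 => ?_⟩
  have h := lift_normBallShift_mk_apply_one n isReduced_toWord hw
  rwa [mk_toWord, h1, eq_comm] at h

end FreeGroup

section incGraph

variable {S A B : Type*} {cα : S → A} {cβ : S → B}

theorem incGraph_adj_inl_inr {x : A} {y : B} :
    (incGraph cα cβ).Adj (.inl x) (.inr y) ↔ ∃ s, cα s = x ∧ cβ s = y := by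
  simp [incGraph, eq_comm]

theorem incGraph_not_adj_inl_inl {x x' : A} : ¬ (incGraph cα cβ).Adj (.inl x) (.inl x') := by
  simp [incGraph]

theorem incGraph_not_adj_inr_inr {y y' : B} : ¬ (incGraph cα cβ).Adj (.inr y) (.inr y') := by
  simp [incGraph]

end incGraph

namespace CayleyIncidence

open SimpleGraph FreeGroup

variable {G ι κ : Type*}

def classα : G × ι × κ → G × κ := fun s => (s.1, s.2.2)

theorem ncard_classα_eq [Finite ι] (x : G × κ) :
    {s : G × ι × κ | classα s = x}.ncard = Nat.card ι := by
  have : {s : G × ι × κ | classα s = x} = Set.range fun i => (x.1, i, x.2) := by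
    ext ⟨h, i, j⟩
    simp [classα, Prod.ext_iff, eq_comm]
  rw [this, Set.ncard_range_of_injective fun i i' h => by simpa using h]

variable [Group G] (g : ι × κ → G)

def classβ : G × ι × κ → G × ι := fun s => (s.1 * g s.2, s.2.1)

abbrev graph : SimpleGraph ((G × κ) ⊕ (G × ι)) := incGraph classα (classβ g)

theorem ncard_classβ_eq [Finite κ] (y : G × ι) :
    {s : G × ι × κ | classβ g s = y}.ncard = Nat.card κ := by
  have : {s : G × ι × κ | classβ g s = y} =
      Set.range fun j => (y.1 * (g (y.2, j))⁻¹, y.2, j) := by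
    ext ⟨h, i, j⟩
    simp only [classβ, Set.mem_range, Prod.mk.injEq]
    constructor
    · rintro ⟨rfl, rfl⟩
      exact ⟨j, by simp⟩
    · rintro ⟨j, rfl, rfl, rfl⟩
      simp
  rw [this, Set.ncard_range_of_injective fun j j' h => by simp at h; exact h.2]

theorem eq_of_classα_eq_of_classβ_eq {s t : G × ι × κ} (hα : classα s = classα t)
    (hβ : classβ g s = classβ g t) : s = t := by
  obtain ⟨h, i, j⟩ := s
  obtain ⟨h', i', j'⟩ := t
  simp only [classα, classβ, Prod.mk.injEq] at hα hβ
  obtain ⟨rfl, rfl⟩ := hα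
  obtain ⟨-, rfl⟩ := hβ
  rfl

theorem graph_adj_inl_inr {h h' : G} {i : ι} {j : κ} :
    (graph g).Adj (.inl (h, j)) (.inr (h', i)) ↔ h' = h * g (i, j) := by
  rw [incGraph_adj_inl_inr]
  constructor
  · rintro ⟨⟨k, i', j'⟩, hα, hβ⟩
    simp only [classα, classβ, Prod.mk.injEq] at hα hβ
    obtain ⟨rfl, rfl⟩ := hα
    obtain ⟨rfl, rfl⟩ := hβ
    rfl
  · rintro rfl
    exact ⟨(h, i, j), rfl, rfl⟩

def edgeLetter : ∀ {u w : (G × κ) ⊕ (G × ι)}, (graph g).Adj u w → (ι × κ) × Bool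
  | .inl (_, j), .inr (_, i), _ => ((i, j), true)
  | .inr (_, i), .inl (_, j), _ => ((i, j), false)
  | .inl _, .inl _, h => absurd h incGraph_not_adj_inl_inl
  | .inr _, .inr _, h => absurd h incGraph_not_adj_inr_inr

def potential : (G × κ) ⊕ (G × ι) → G := Sum.elim Prod.fst Prod.fst

theorem potential_eq_mul_lift_edgeLetter {u w : (G × κ) ⊕ (G × ι)} (huw : (graph g).Adj u w) :
    potential w = potential u * lift g (mk [edgeLetter g huw]) := by
  rcases u with ⟨h, j⟩ | ⟨h, i⟩ <;> rcases w with ⟨h', j'⟩ | ⟨h', i'⟩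
  · exact absurd huw incGraph_not_adj_inl_inl
  · simp [edgeLetter, potential, (graph_adj_inl_inr g).1 huw]
  · simp [edgeLetter, potential, (graph_adj_inl_inr g).1 huw.symm]
  · exact absurd huw incGraph_not_adj_inr_inr

theorem eq_of_edgeLetter_fst_eq {u w z : (G × κ) ⊕ (G × ι)} (huw : (graph g).Adj u w)
    (hwz : (graph g).Adj w z) (he : (edgeLetter g huw).1 = (edgeLetter g hwz).1) : u = z := by
  rcases u with ⟨h, j⟩ | ⟨h, i⟩ <;> rcases w with ⟨h', j'⟩ | ⟨h', i'⟩ <;>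
    rcases z with ⟨k, j''⟩ | ⟨k, i''⟩ <;>
    try simp only [incGraph_not_adj_inl_inl, incGraph_not_adj_inr_inr] at huw hwz
  · simp only [edgeLetter, Prod.mk.injEq] at he
    rw [graph_adj_inl_inr] at huw
    rw [adj_comm, graph_adj_inl_inr, ← he.2, huw] at hwz
    rw [mul_right_cancel hwz, he.2]
  · simp only [edgeLetter, Prod.mk.injEq] at he
    rw [adj_comm, graph_adj_inl_inr] at huw
    rw [graph_adj_inl_inr, ← he.1, ← huw] at hwz
    rw [hwz, he.1]

def walkWord {u v : (G × κ) ⊕ (G × ι)} (p : (graph g).Walk u v) : List ((ι × κ) × Bool) :=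
  p.darts.map fun d => edgeLetter g d.adj

@[simp]
theorem walkWord_nil {u : (G × κ) ⊕ (G × ι)} :
    walkWord g (Walk.nil : (graph g).Walk u u) = [] := rfl

@[simp]
theorem walkWord_cons {u w v : (G × κ) ⊕ (G × ι)} (huw : (graph g).Adj u w)
    (p : (graph g).Walk w v) : walkWord g (.cons huw p) = edgeLetter g huw :: walkWord g p := rfl

@[simp]
theorem length_walkWord {u v : (G × κ) ⊕ (G × ι)} (p : (graph g).Walk u v) :
    (walkWord g p).length = p.length := by
  simp [walkWord]

theorem potential_eq_mul_lift_walkWord {u v : (G × κ) ⊕ (G × ι)} (p : (graph g).Walk u v) :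
    potential v = potential u * lift g (mk (walkWord g p)) := by
  induction p with
  | nil => simp
  | cons huw p ih =>
    rw [ih, potential_eq_mul_lift_edgeLetter g huw, walkWord_cons,
      ← List.singleton_append (l := walkWord g p), ← mul_mk, _root_.map_mul, mul_assoc]

theorem isReduced_walkWord {u v : (G × κ) ⊕ (G × ι)} {p : (graph g).Walk u v}
    (hp : p.IsTrail) : IsReduced (walkWord g p) := by
  induction p with
  | nil => exact .nil
  | cons huw p ih =>
    cases p with
    | nil => exact .singleton
    | cons hwz q =>
      rw [walkWord_cons, walkWord_cons, isReduced_cons_cons]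
      refine ⟨fun he => absurd hp ?_, walkWord_cons g hwz q ▸ ih hp.of_cons⟩
      obtain rfl := eq_of_edgeLetter_fst_eq g huw hwz he
      simp [Walk.isTrail_cons, Sym2.eq_swap]

theorem lt_length_of_isCycle [DecidableEq ι] [DecidableEq κ] {n : ℕ}
    (hg : ∀ w : FreeGroup (ι × κ), w.norm ≤ n → lift g w = 1 → w = 1)
    {v : (G × κ) ⊕ (G × ι)} {c : (graph g).Walk v v} (hc : c.IsCycle) : n < c.length := by
  by_contra! hle
  have hnorm : (mk (walkWord g c)).norm = c.length := by
    rw [(isReduced_walkWord g hc.isTrail).norm_mk, length_walkWord]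
  have hword : mk (walkWord g c) = 1 :=
    hg _ (hnorm ▸ hle) (left_eq_mul.mp (potential_eq_mul_lift_walkWord g c))
  rw [hword, FreeGroup.norm_one] at hnorm
  have := hc.three_le_length
  omega

end CayleyIncidence

open CayleyIncidence in
theorem partition_construction_general (a b r : ℕ) :
    ∃ (S A B : Type) (_ : Fintype S) (cα : S → A) (cβ : S → B),
      (∀ x : A, {s : S | cα s = x}.ncard = a) ∧
      (∀ y : B, {s : S | cβ s = y}.ncard = b) ∧
      (∀ x y : S, cα x = cα y → cβ x = cβ y → x = y) ∧
      (∀ (v : A ⊕ B) (c : (incGraph cα cβ).Walk v v), c.IsCycle → 2 * r < c.length) := by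
  obtain ⟨G, _, _, g, hg⟩ :=
    FreeGroup.exists_finite_eq_one_of_lift_eq_one_of_norm_le (ι := Fin a × Fin b) (2 * r)
  refine ⟨G × Fin a × Fin b, G × Fin b, G × Fin a, Fintype.ofFinite _, classα, classβ g,
    fun x => ?_, fun y => ?_, fun _ _ => eq_of_classα_eq_of_classβ_eq g,
    fun _ _ => lt_length_of_isCycle g hg⟩
  · rw [ncard_classα_eq, Nat.card_fin]
  · rw [ncard_classβ_eq, Nat.card_fin]

/-- For all positive integers `a`, `b`, `r` there is a finite set `S` with
partitions `α`, `β` (class maps `cα`, `cβ`) such that every `α`-class has `a` elements, every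
`β`-class has `b` elements, an `α`-class meets a `β`-class in at most one element, and every
simple cycle of the incidence graph is longer than `2r`. -/
theorem partition_construction (a b r : ℕ) (ha : 0 < a) (hb : 0 < b) (hr : 0 < r) :
    ∃ (S A B : Type) (_ : Fintype S) (cα : S → A) (cβ : S → B),
      (∀ x : A, {s : S | cα s = x}.ncard = a) ∧
      (∀ y : B, {s : S | cβ s = y}.ncard = b) ∧
      (∀ x y : S, cα x = cα y → cβ x = cβ y → x = y) ∧
      (∀ (v : A ⊕ B) (c : (incGraph cα cβ).Walk v v), c.IsCycle → 2 * r < c.length) :=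
  partition_construction_general a b r
end
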